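/- arXiv:2107.14588 — 2 statements merged into one kernel-verified Lean document; each statement's English description precedes it below -/
import Mathlib

section
/- (Chain reduction, forward direction.) Let a = (a_1,…,a_n) be link lengths with all a_i > 0 and n ≥ 4. If (α,β) ∈ M^{n-1} is a spherical configuration, i.e. ‖f_{a,n-1}(α,β)‖ = a_n, then its vector of diagonal lengths (L_2(α,β),…,L_{n-2}(α,β)) lies in the diagonal space DS(a). -/
open Real

/-- The `k`-th endpoint map of a spherical-joint kinematic chain with link lengths
`a 1, …, a n` and joint angles `α j ∈ [0,2π)`, `β j ∈ [0,π]`. -/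
noncomputable def chainEndpoint (a α β : ℕ → ℝ) (k : ℕ) : EuclideanSpace ℝ (Fin 3) :=
  ∑ j ∈ Finset.Icc 1 k, a j •
    (WithLp.equiv 2 (Fin 3 → ℝ)).symm
      ![Real.sin (β j) * Real.cos (α j), Real.sin (β j) * Real.sin (α j), Real.cos (β j)]

/-- `R_k^min = max_{1 ≤ i ≤ k} (2 a_i − Σ_{j=1}^k a_j)`. -/
noncomputable def Rmin (a : ℕ → ℝ) (k : ℕ) : ℝ :=
  sSup ((fun i => 2 * a i - ∑ j ∈ Finset.Icc 1 k, a j) '' Set.Icc 1 k)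

/-- Membership of a vector of diagonal lengths `(L_2, …, L_{n-2})` (encoded as a function
`L : ℕ → ℝ`, with the convention `L (n-1) = a n`) in the diagonal space `DS(a)`:
for every `1 ≤ k ≤ n−3` one has `|L_{n-k} − a_{n-k}| ≤ L_{n-k-1} ≤ L_{n-k} + a_{n-k}`
and `max(0, R_{n-k-1}^min) ≤ L_{n-k-1} ≤ R_{n-k-1}^max`. -/
def memDS (a : ℕ → ℝ) (n : ℕ) (L : ℕ → ℝ) : Prop :=
  ∀ k, 1 ≤ k → k ≤ n - 3 →
    |L (n - k) - a (n - k)| ≤ L (n - k - 1) ∧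
    L (n - k - 1) ≤ L (n - k) + a (n - k) ∧
    max 0 (Rmin a (n - k - 1)) ≤ L (n - k - 1) ∧
    L (n - k - 1) ≤ ∑ j ∈ Finset.Icc 1 (n - k - 1), a j

/-! Every diagonal length is the norm of a partial sum of link vectors of lengths `a j`, so
all the defining inequalities of `DS(a)` are triangle inequalities: the two-sided one for
`f_{k+1} = f_k + a_{k+1} u_{k+1}`, the polygon inequality `‖f_k‖ ≤ Σ a_j`, and its reverse
`a_i ≤ ‖f_k‖ + Σ_{j ≠ i} a_j`, which gives the lower bound `R_k^min`. -/

theorem two_mul_norm_sub_sum_norm_le_norm_sum {ι E : Type*} [SeminormedAddCommGroup E]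
    [DecidableEq ι] {s : Finset ι} {i : ι} (hi : i ∈ s) (v : ι → E) :
    2 * ‖v i‖ - ∑ j ∈ s, ‖v j‖ ≤ ‖∑ j ∈ s, v j‖ := by
  have hsplit : v i = ∑ j ∈ s, v j - ∑ j ∈ s.erase i, v j := by
    rw [← Finset.add_sum_erase s v hi, add_sub_cancel_right]
  have hvi : ‖v i‖ ≤ ‖∑ j ∈ s, v j‖ + ∑ j ∈ s.erase i, ‖v j‖ :=
    calc ‖v i‖ ≤ ‖∑ j ∈ s, v j‖ + ‖∑ j ∈ s.erase i, v j‖ := hsplit ▸ norm_sub_le _ _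
      _ ≤ ‖∑ j ∈ s, v j‖ + ∑ j ∈ s.erase i, ‖v j‖ := by gcongr; exact norm_sum_le _ _
  linarith [Finset.add_sum_erase s (fun j => ‖v j‖) hi]

theorem max_zero_Rmin_le {a : ℕ → ℝ} {k : ℕ} {x : ℝ} (hx : 0 ≤ x)
    (h : ∀ i ∈ Finset.Icc 1 k, 2 * a i - ∑ j ∈ Finset.Icc 1 k, a j ≤ x) :
    max 0 (Rmin a k) ≤ x := by
  refine max_le hx (Real.sSup_le ?_ hx)
  rintro _ ⟨i, hi, rfl⟩
  exact h i (Finset.mem_Icc.2 hi)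

noncomputable def linkDirection (α β : ℕ → ℝ) (j : ℕ) : EuclideanSpace ℝ (Fin 3) :=
  (WithLp.equiv 2 (Fin 3 → ℝ)).symm
    ![Real.sin (β j) * Real.cos (α j), Real.sin (β j) * Real.sin (α j), Real.cos (β j)]

theorem norm_linkDirection (α β : ℕ → ℝ) (j : ℕ) : ‖linkDirection α β j‖ = 1 := by
  rw [EuclideanSpace.norm_eq, Real.sqrt_eq_one]
  simp only [linkDirection, Fin.sum_univ_three, WithLp.equiv_symm_apply, WithLp.ofLp_toLp,
    Matrix.cons_val_zero, Matrix.cons_val_one, Matrix.cons_val_two, Matrix.head_cons,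
    Matrix.tail_cons, Real.norm_eq_abs, sq_abs]
  nlinarith [sin_sq_add_cos_sq (α j), sin_sq_add_cos_sq (β j)]

theorem norm_smul_linkDirection {a : ℝ} (ha : 0 ≤ a) (α β : ℕ → ℝ) (j : ℕ) :
    ‖a • linkDirection α β j‖ = a := by
  rw [norm_smul, norm_linkDirection, mul_one, Real.norm_of_nonneg ha]

theorem chainEndpoint_eq_sum (a α β : ℕ → ℝ) (k : ℕ) :
    chainEndpoint a α β k = ∑ j ∈ Finset.Icc 1 k, a j • linkDirection α β j :=
  rfl

theorem chainEndpoint_succ (a α β : ℕ → ℝ) (k : ℕ) :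
    chainEndpoint a α β (k + 1) =
      chainEndpoint a α β k + a (k + 1) • linkDirection α β (k + 1) := by
  rw [chainEndpoint_eq_sum, chainEndpoint_eq_sum, Finset.sum_Icc_succ_top (by omega)]

theorem chainEndpoint_succ_sub (a α β : ℕ → ℝ) (k : ℕ) :
    chainEndpoint a α β (k + 1) - a (k + 1) • linkDirection α β (k + 1) =
      chainEndpoint a α β k := by
  rw [chainEndpoint_succ, add_sub_cancel_right]

section chainEndpoint

variable {a : ℕ → ℝ} (α β : ℕ → ℝ) {k : ℕ}

theorem abs_norm_chainEndpoint_succ_sub_le (ha : 0 ≤ a (k + 1)) :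
    |‖chainEndpoint a α β (k + 1)‖ - a (k + 1)| ≤ ‖chainEndpoint a α β k‖ := by
  simpa only [chainEndpoint_succ_sub, norm_smul_linkDirection ha] using
    abs_norm_sub_norm_le (chainEndpoint a α β (k + 1)) (a (k + 1) • linkDirection α β (k + 1))

theorem norm_chainEndpoint_le_succ_add (ha : 0 ≤ a (k + 1)) :
    ‖chainEndpoint a α β k‖ ≤ ‖chainEndpoint a α β (k + 1)‖ + a (k + 1) := by
  simpa only [chainEndpoint_succ_sub, norm_smul_linkDirection ha] using
    norm_sub_le (chainEndpoint a α β (k + 1)) (a (k + 1) • linkDirection α β (k + 1))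

theorem norm_chainEndpoint_le_sum (ha : ∀ j ∈ Finset.Icc 1 k, 0 ≤ a j) :
    ‖chainEndpoint a α β k‖ ≤ ∑ j ∈ Finset.Icc 1 k, a j :=
  calc ‖chainEndpoint a α β k‖ ≤ ∑ j ∈ Finset.Icc 1 k, ‖a j • linkDirection α β j‖ :=
        norm_sum_le _ _
    _ = ∑ j ∈ Finset.Icc 1 k, a j :=
        Finset.sum_congr rfl fun j hj => norm_smul_linkDirection (ha j hj) α β j

theorem max_zero_Rmin_le_norm_chainEndpoint (ha : ∀ j ∈ Finset.Icc 1 k, 0 ≤ a j) :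
    max 0 (Rmin a k) ≤ ‖chainEndpoint a α β k‖ := by
  refine max_zero_Rmin_le (norm_nonneg _) fun i hi => ?_
  have h := two_mul_norm_sub_sum_norm_le_norm_sum hi fun j => a j • linkDirection α β j
  rwa [Finset.sum_congr rfl fun j hj => norm_smul_linkDirection (ha j hj) α β j,
    norm_smul_linkDirection (ha i hi)] at h

end chainEndpoint

theorem spherical_config_diagonals_mem_DS_general
    (n : ℕ) (a : ℕ → ℝ) (ha : ∀ i, 1 ≤ i → i ≤ n → 0 < a i)
    (α β : ℕ → ℝ) :
    memDS a n (fun k => ‖chainEndpoint a α β k‖) := by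
  intro k hk1 hk2
  obtain ⟨m, hm⟩ : ∃ m, n - k = m + 1 := ⟨n - k - 1, by omega⟩
  have ha_succ : 0 ≤ a (m + 1) := (ha _ (by omega) (by omega)).le
  have ha_le : ∀ j ∈ Finset.Icc 1 m, 0 ≤ a j := fun j hj =>
    have ⟨hj1, hjm⟩ := Finset.mem_Icc.1 hj
    (ha j hj1 (by omega)).le
  simp only [hm, Nat.add_sub_cancel]
  exact ⟨abs_norm_chainEndpoint_succ_sub_le α β ha_succ,
    norm_chainEndpoint_le_succ_add α β ha_succ,
    max_zero_Rmin_le_norm_chainEndpoint α β ha_le,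
    norm_chainEndpoint_le_sum α β ha_le⟩

/-- Chain reduction, forward direction: if `(α,β) ∈ M^{n-1}` is a spherical configuration,
i.e. `‖f_{a,n-1}(α,β)‖ = a_n`, then its vector of diagonal lengths
`(L_2(α,β), …, L_{n-2}(α,β))`, `L_k(α,β) = ‖f_{a,k}(α,β)‖`, lies in the diagonal space. -/
theorem spherical_config_diagonals_mem_DS
    (n : ℕ) (hn : 4 ≤ n) (a : ℕ → ℝ) (ha : ∀ i, 1 ≤ i → i ≤ n → 0 < a i)
    (α β : ℕ → ℝ)
    (hα : ∀ j, 1 ≤ j → j ≤ n - 1 → α j ∈ Set.Ico (0 : ℝ) (2 * π))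
    (hβ : ∀ j, 1 ≤ j → j ≤ n - 1 → β j ∈ Set.Icc (0 : ℝ) π)
    (hclosed : ‖chainEndpoint a α β (n - 1)‖ = a n) :
    memDS a n (fun k => ‖chainEndpoint a α β k‖) :=
  spherical_config_diagonals_mem_DS_general n a ha α β
end

section
/- (Chain reduction, converse direction.) Let a = (a_1,…,a_n) be link lengths with all a_i > 0 and n ≥ 4. For every vector (L_2,…,L_{n-2}) in the diagonal space DS(a) there exist angle vectors α ∈ [0,2π)^{n-1}, β ∈ [0,π]^{n-1} such that ‖f_{a,n-1}(α,β)‖ = a_n and ‖f_{a,k}(α_1,…,α_k,β_1,…,β_k)‖ = L_k for every 2 ≤ k ≤ n−2; that is, every feasible diagonal vector is realized by a spherical configuration of the closed kinematic chain. -/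
open Real

/-!
A point of DS(a) prescribes the lengths `L_k = ‖f_{a,k}‖` of consecutive diagonals, and the
inequalities defining DS(a) say exactly that `L_k`, `L_{k+1}` and `a_{k+1}` are the sides of a
(possibly degenerate) triangle. So the joints `P_0 = 0, P_1, …, P_{n-1}` can be placed one at a
time: since the sphere `‖q‖ = L_{k+1}` is connected, the distance `‖q - P_k‖` takes every value
between `|L_k - L_{k+1}|` and `L_k + L_{k+1}`, in particular `a_{k+1}`. Writing each link
`P_j - P_{j-1}` in spherical coordinates gives the angles.
-/

open Finset Metric

section

variable {E : Type*} [NormedAddCommGroup E] [NormedSpace ℝ E]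

theorem exists_norm_eq_norm_sub_eq (hE : 1 < Module.rank ℝ E) (p : E) {r t : ℝ}
    (h₁ : |‖p‖ - t| ≤ r) (h₂ : r ≤ ‖p‖ + t) : ∃ q : E, ‖q‖ = t ∧ ‖q - p‖ = r := by
  have : Nontrivial E := rank_pos_iff_nontrivial.mp (zero_lt_one.trans hE)
  obtain ⟨u, hu, hpu⟩ : ∃ u : E, ‖u‖ = 1 ∧ ‖p‖ • u = p := by
    by_cases hp : p = 0
    · obtain ⟨u, hu⟩ := exists_norm_eq E zero_le_one
      exact ⟨u, hu, by simp [hp]⟩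
    · exact ⟨‖p‖⁻¹ • p, norm_smul_inv_norm hp, by simp [smul_smul, norm_ne_zero_iff.mpr hp]⟩
  have ht : 0 ≤ t := by linarith [abs_le.mp h₁]
  have hnear : t • u ∈ sphere (0 : E) t := by simp [norm_smul, hu, abs_of_nonneg ht]
  have hfar : -(t • u) ∈ sphere (0 : E) t := by simp [norm_smul, hu, abs_of_nonneg ht]
  have hnear_dist : ‖t • u - p‖ = |‖p‖ - t| := by
    conv_lhs => rw [← hpu]
    rw [← sub_smul, norm_smul, hu, mul_one, Real.norm_eq_abs, abs_sub_comm]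
  have hfar_dist : ‖-(t • u) - p‖ = ‖p‖ + t := by
    conv_lhs => rw [← hpu]
    rw [← neg_smul, ← sub_smul, norm_smul, hu, mul_one, Real.norm_eq_abs,
      show -t - ‖p‖ = -(‖p‖ + t) by ring, abs_neg, abs_of_nonneg (by positivity)]
  obtain ⟨q, hq, hqp⟩ := (isPreconnected_sphere hE 0 t).intermediate_value hnear hfar
    (continuous_norm.comp (continuous_sub_right p)).continuousOn
    (by simpa only [Function.comp_apply, hnear_dist, hfar_dist] using Set.mem_Icc.mpr ⟨h₁, h₂⟩)
  exact ⟨q, mem_sphere_zero_iff_norm.mp hq, hqp⟩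

theorem exists_chain_of_triangle (hE : 1 < Module.rank ℝ E) (d r : ℕ → ℝ) (m : ℕ)
    (hd₀ : d 0 = 0)
    (htri : ∀ k < m, |d k - d (k + 1)| ≤ r (k + 1) ∧ r (k + 1) ≤ d k + d (k + 1)) :
    ∃ P : ℕ → E, (∀ k ≤ m, ‖P k‖ = d k) ∧ ∀ k < m, ‖P (k + 1) - P k‖ = r (k + 1) := by
  induction m with
  | zero =>
    exact ⟨0, fun k hk => by simp [Nat.le_zero.mp hk, hd₀], fun k hk => absurd hk k.not_lt_zero⟩
  | succ m ih =>
    obtain ⟨P, hPnorm, hPlink⟩ := ih fun k hk => htri k (by omega)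
    obtain ⟨q, hqnorm, hqlink⟩ := exists_norm_eq_norm_sub_eq hE (P m)
      ((hPnorm m le_rfl).symm ▸ (htri m m.lt_succ_self).1)
      ((hPnorm m le_rfl).symm ▸ (htri m m.lt_succ_self).2)
    refine ⟨Function.update P (m + 1) q, fun k hk => ?_, fun k hk => ?_⟩
    · rcases Nat.lt_or_ge k (m + 1) with hk' | hk'
      · rw [Function.update_of_ne (by omega), hPnorm k (by omega)]
      · rw [show k = m + 1 by omega, Function.update_self, hqnorm]
    · rcases Nat.lt_or_ge k m with hk' | hk'
      · rw [Function.update_of_ne (by omega), Function.update_of_ne (by omega), hPlink k hk']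
      · rw [show k = m by omega, Function.update_self, Function.update_of_ne (by omega), hqlink]

end

theorem Finset.sum_Icc_one_sub_pred {M : Type*} [AddCommGroup M] (f : ℕ → M) (k : ℕ) :
    ∑ j ∈ Icc 1 k, (f j - f (j - 1)) = f k - f 0 := by
  induction k with
  | zero => simp
  | succ k ih => rw [sum_Icc_succ_top (by omega), ih, Nat.add_sub_cancel]; abel

noncomputable def sphericalUnit (α β : ℝ) : EuclideanSpace ℝ (Fin 3) :=
  (WithLp.equiv 2 (Fin 3 → ℝ)).symm ![sin β * cos α, sin β * sin α, cos β]

theorem exists_sphericalCoords (v : EuclideanSpace ℝ (Fin 3)) :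
    ∃ α ∈ Set.Ico 0 (2 * π), ∃ β ∈ Set.Icc 0 π, ‖v‖ • sphericalUnit α β = v := by
  by_cases hv : v = 0
  · exact ⟨0, ⟨le_rfl, by positivity⟩, 0, ⟨le_rfl, pi_pos.le⟩, by simp [hv]⟩
  have hρ : 0 < ‖v‖ := norm_pos_iff.mpr hv
  set w : ℂ := ⟨v 0, v 1⟩
  have hnorm_sq : ‖v‖ ^ 2 = ‖w‖ ^ 2 + v 2 ^ 2 := by
    rw [EuclideanSpace.norm_sq_eq, Fin.sum_univ_three, Complex.sq_norm, Complex.normSq_apply]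
    simp only [Real.norm_eq_abs, sq_abs, w]; ring
  have hz : |v 2 / ‖v‖| ≤ 1 := by
    rw [abs_div, abs_norm, div_le_one hρ, ← sq_le_sq₀ (abs_nonneg _) hρ.le, sq_abs]
    nlinarith [sq_nonneg ‖w‖]
  have hsin : ‖v‖ * sin (arccos (v 2 / ‖v‖)) = ‖w‖ := by
    have h : 1 - (v 2 / ‖v‖) ^ 2 = (‖w‖ / ‖v‖) ^ 2 := by field_simp; linarith
    rw [sin_arccos, h, Real.sqrt_sq (by positivity)]
    field_simp
  have hcos_arg : cos (toIcoMod two_pi_pos 0 (Complex.arg w)) = cos (Complex.arg w) := by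
    rw [← self_sub_toIcoDiv_zsmul, zsmul_eq_mul, cos_sub_int_mul_two_pi]
  have hsin_arg : sin (toIcoMod two_pi_pos 0 (Complex.arg w)) = sin (Complex.arg w) := by
    rw [← self_sub_toIcoDiv_zsmul, zsmul_eq_mul, sin_sub_int_mul_two_pi]
  refine ⟨_, by simpa using toIcoMod_mem_Ico two_pi_pos 0 (Complex.arg w), arccos (v 2 / ‖v‖),
    ⟨arccos_nonneg _, arccos_le_pi _⟩, ?_⟩
  ext i
  fin_cases i
  · simp [sphericalUnit, hcos_arg, ← mul_assoc, hsin, Complex.norm_mul_cos_arg, w]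
  · simp [sphericalUnit, hsin_arg, ← mul_assoc, hsin, Complex.norm_mul_sin_arg, w]
  · simp [sphericalUnit, cos_arccos (abs_le.mp hz).1 (abs_le.mp hz).2]
    field_simp

theorem chainEndpoint_eq_sub {a α β : ℕ → ℝ} {P : ℕ → EuclideanSpace ℝ (Fin 3)} {k : ℕ}
    (h : ∀ j ∈ Icc 1 k, a j • sphericalUnit (α j) (β j) = P j - P (j - 1)) :
    chainEndpoint a α β k = P k - P 0 := by
  rw [← sum_Icc_one_sub_pred]
  exact sum_congr rfl h

theorem Rmin_two (a : ℕ → ℝ) : Rmin a 2 = |a 1 - a 2| := by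
  have hsum : ∑ j ∈ Icc 1 2, a j = a 1 + a 2 := by simp [sum_Icc_succ_top]
  rw [Rmin, show Set.Icc (1 : ℕ) 2 = {1, 2} by ext; simp; omega, Set.image_pair, csSup_pair,
    hsum, abs_eq_max_neg]
  congr 1 <;> ring

/-- `L` together with the lengths `‖f_{a,0}‖ = 0` and `‖f_{a,1}‖ = a_1` shared by all
configurations. -/
def diagonalLength (a L : ℕ → ℝ) : ℕ → ℝ
  | 0 => 0
  | 1 => a 1
  | k + 2 => L (k + 2)

theorem diagonalLength_of_two_le {a L : ℕ → ℝ} {k : ℕ} (hk : 2 ≤ k) :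
    diagonalLength a L k = L k := by
  obtain ⟨k, rfl⟩ := Nat.exists_eq_add_of_le' hk
  rfl

theorem memDS.triangle_diagonalLength {a L : ℕ → ℝ} {n : ℕ} (hL : memDS a n L) (hn : 4 ≤ n)
    (ha₁ : 0 ≤ a 1) (k : ℕ) (hk : k < n - 1) :
    |diagonalLength a L k - diagonalLength a L (k + 1)| ≤ a (k + 1) ∧
      a (k + 1) ≤ diagonalLength a L k + diagonalLength a L (k + 1) := by
  match k with
  | 0 => simp [diagonalLength, abs_of_nonneg ha₁]
  | 1 =>
    obtain ⟨-, -, hlow, hupp⟩ := hL (n - 3) (by omega) le_rfl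
    rw [show n - (n - 3) - 1 = 2 by omega] at hlow hupp
    rw [Rmin_two] at hlow
    have hupp : L 2 ≤ a 1 + a 2 := by simpa [sum_Icc_succ_top] using hupp
    have hlow := abs_le.mp ((le_max_right _ _).trans hlow)
    simp only [diagonalLength, abs_le]
    refine ⟨⟨?_, ?_⟩, ?_⟩ <;> linarith
  | k + 2 =>
    obtain ⟨hlow, hupp, -, -⟩ := hL (n - k - 3) (by omega) (by omega)
    rw [show n - (n - k - 3) = k + 3 by omega, show k + 3 - 1 = k + 2 by omega] at hlow hupp
    have hlow := abs_le.mp hlow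
    simp only [diagonalLength, abs_le]
    refine ⟨⟨?_, ?_⟩, ?_⟩ <;> linarith

/-- Chain reduction, converse direction: every vector `(L_2, …, L_{n-2})` in the diagonal
space `DS(a)` is realized by a spherical configuration of the closed kinematic chain:
there are angles `α ∈ [0,2π)^{n-1}`, `β ∈ [0,π]^{n-1}` with `‖f_{a,n-1}(α,β)‖ = a_n` and
`‖f_{a,k}(α,β)‖ = L_k` for all `2 ≤ k ≤ n−2`. -/
theorem DS_realized_by_spherical_config
    (n : ℕ) (hn : 4 ≤ n) (a : ℕ → ℝ) (ha : ∀ i, 1 ≤ i → i ≤ n → 0 < a i)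
    (L : ℕ → ℝ) (hLtop : L (n - 1) = a n) (hL : memDS a n L) :
    ∃ α β : ℕ → ℝ,
      (∀ j, 1 ≤ j → j ≤ n - 1 → α j ∈ Set.Ico (0 : ℝ) (2 * π)) ∧
      (∀ j, 1 ≤ j → j ≤ n - 1 → β j ∈ Set.Icc (0 : ℝ) π) ∧
      ‖chainEndpoint a α β (n - 1)‖ = a n ∧
      ∀ k, 2 ≤ k → k ≤ n - 2 → ‖chainEndpoint a α β k‖ = L k := by
  have hrank : 1 < Module.rank ℝ (EuclideanSpace ℝ (Fin 3)) := by
    rw [← Module.finrank_eq_rank, finrank_euclideanSpace]; norm_num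
  obtain ⟨P, hPnorm, hPlink⟩ := exists_chain_of_triangle hrank (diagonalLength a L) a (n - 1) rfl
    (hL.triangle_diagonalLength hn (ha 1 le_rfl (by omega)).le)
  choose α hα β hβ hαβ using fun j => exists_sphericalCoords (P j - P (j - 1))
  have hP₀ : P 0 = 0 := norm_eq_zero.mp (hPnorm 0 (Nat.zero_le _))
  have hend : ∀ k ≤ n - 1, chainEndpoint a α β k = P k := by
    intro k hk
    rw [chainEndpoint_eq_sub (P := P), hP₀, sub_zero]
    intro j hj
    obtain ⟨hj₁, hjk⟩ := mem_Icc.mp hj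
    obtain ⟨i, rfl⟩ : ∃ i, j = i + 1 := ⟨j - 1, by omega⟩
    rw [← hαβ, Nat.add_sub_cancel, hPlink i (by omega)]
  refine ⟨α, β, fun j _ _ => hα j, fun j _ _ => hβ j, ?_, fun k hk₂ hk => ?_⟩
  · rw [hend _ le_rfl, hPnorm _ le_rfl, diagonalLength_of_two_le (by omega), hLtop]
  · rw [hend k (by omega), hPnorm k (by omega), diagonalLength_of_two_le hk₂]
end
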